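/- arXiv:2303.09903 — 2 statements merged into one kernel-verified Lean document; each statement's English description precedes it below -/
import Mathlib

section
/- Let H be a connected k-uniform hypergraph with n ≥ 2 vertices and m hyperedges, and let χ be its strong chromatic number. Then q_max(H) ≥ (km/n)·(1 + 1/(χ-1)). -/
/-!
Testing the Rayleigh quotient of `Q(H)` on the all-ones vector gives `n · q_max ≥ ∑ᵢ ∑ⱼ Q_ij`.
Each hyperedge `e ∋ i` contributes `(|e| - 1) · 1/(|e| - 1) = 1` to the `i`-th row sum of `A(H)`,
so the row sums of `A(H)` are the degrees and `∑ᵢ ∑ⱼ Q_ij = 2 ∑ᵢ dᵢ = 2km`, i.e. `q_max ≥ 2km/n`.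
The bound follows because `1 + 1/(χ - 1) ≤ 2`.
-/

open Finset

/-- The set of hyperedges containing both `i` and `j`. -/
def edgesBetween {n : ℕ} (E : Finset (Finset (Fin n))) (i j : Fin n) :
    Finset (Finset (Fin n)) :=
  E.filter fun e => i ∈ e ∧ j ∈ e

/-- The degree of vertex `i`: the number of hyperedges containing `i`. -/
def hdeg {n : ℕ} (E : Finset (Finset (Fin n))) (i : Fin n) : ℕ :=
  (E.filter fun e => i ∈ e).card

/-- Two (distinct) vertices are adjacent if some hyperedge contains both. -/
def Adj {n : ℕ} (E : Finset (Finset (Fin n))) (i j : Fin n) : Prop :=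
  i ≠ j ∧ ∃ e ∈ E, i ∈ e ∧ j ∈ e

/-- The neighbours of a vertex. -/
noncomputable def neighbors {n : ℕ} (E : Finset (Finset (Fin n))) (i : Fin n) :
    Finset (Fin n) :=
  @Finset.filter _ (fun j => Adj E i j) (Classical.decPred _) Finset.univ

/-- Banerjee's adjacency matrix of a hypergraph: `A i j = ∑_{e ∋ i,j} 1/(|e|-1)`. -/
noncomputable def adjMat {n : ℕ} (E : Finset (Finset (Fin n))) :
    Matrix (Fin n) (Fin n) ℝ :=
  Matrix.of fun i j =>
    if i = j then 0 else ∑ e ∈ edgesBetween E i j, 1 / ((e.card : ℝ) - 1)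

/-- The signless Laplacian matrix `Q = D + A`. -/
noncomputable def signlessLap {n : ℕ} (E : Finset (Finset (Fin n))) :
    Matrix (Fin n) (Fin n) ℝ :=
  Matrix.diagonal (fun i => (hdeg E i : ℝ)) + adjMat E

/-- Largest eigenvalue of a real matrix. -/
noncomputable def qmax {n : ℕ} (M : Matrix (Fin n) (Fin n) ℝ) : ℝ :=
  sSup (spectrum ℝ M)

/-- Smallest eigenvalue of a real matrix. -/
noncomputable def qmin {n : ℕ} (M : Matrix (Fin n) (Fin n) ℝ) : ℝ :=
  sInf (spectrum ℝ M)

/-- A hypergraph is `k`-uniform if every hyperedge has exactly `k` vertices. -/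
def IsUniform {n : ℕ} (k : ℕ) (E : Finset (Finset (Fin n))) : Prop :=
  ∀ e ∈ E, e.card = k

/-- A hypergraph is connected if any two vertices are joined by a walk. -/
def Conn {n : ℕ} (E : Finset (Finset (Fin n))) : Prop :=
  ∀ i j : Fin n, Relation.ReflTransGen (Adj E) i j

/-- The strong chromatic number of a hypergraph. -/
noncomputable def strongChromatic {n : ℕ} (E : Finset (Finset (Fin n))) : ℕ :=
  sInf {c : ℕ | ∃ f : Fin n → Fin c, ∀ i j : Fin n, Adj E i j → f i ≠ f j}

open Matrix

namespace Matrix.IsHermitian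

open scoped MatrixOrder

variable {ι : Type*} [Fintype ι] [DecidableEq ι]

theorem dotProduct_mulVec_le_sSup_spectrum_mul {M : Matrix ι ι ℝ} (hM : M.IsHermitian)
    (x : ι → ℝ) : x ⬝ᵥ (M *ᵥ x) ≤ sSup (spectrum ℝ M) * (x ⬝ᵥ x) := by
  have hle : M ≤ algebraMap ℝ _ (sSup (spectrum ℝ M)) :=
    le_algebraMap_of_spectrum_le (fun r hr ↦ le_csSup finite_real_spectrum.bddAbove hr) hM
  have := (le_iff.mp hle).dotProduct_mulVec_nonneg x
  simp only [star_trivial, sub_mulVec, dotProduct_sub, Algebra.algebraMap_eq_smul_one,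
    smul_mulVec, one_mulVec, dotProduct_smul, smul_eq_mul, sub_nonneg] at this
  exact this

end Matrix.IsHermitian

variable {n : ℕ} (E : Finset (Finset (Fin n)))

lemma edgesBetween_comm (i j : Fin n) : edgesBetween E i j = edgesBetween E j i := by
  simp only [edgesBetween, and_comm]

lemma adjMat_isHermitian : (adjMat E).IsHermitian := by
  ext i j
  simp only [adjMat, conjTranspose_apply, of_apply, star_trivial, eq_comm (a := j),
    edgesBetween_comm E j i]

lemma signlessLap_isHermitian : (signlessLap E).IsHermitian :=
  (isHermitian_diagonal _).add (adjMat_isHermitian E)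

lemma adjMat_apply_eq_sum (i j : Fin n) :
    adjMat E i j = ∑ e ∈ E with i ∈ e, if j ∈ e.erase i then 1 / ((e.card : ℝ) - 1) else 0 := by
  rcases eq_or_ne i j with rfl | hij
  · simp [adjMat]
  · rw [adjMat, of_apply, if_neg hij, edgesBetween, sum_filter, sum_filter]
    refine sum_congr rfl fun e _ ↦ ?_
    by_cases hi : i ∈ e <;> simp [hi, hij.symm]

lemma sum_adjMat_row (hE : ∀ e ∈ E, 2 ≤ e.card) (i : Fin n) :
    ∑ j, adjMat E i j = hdeg E i := by
  simp_rw [adjMat_apply_eq_sum, sum_comm (s := univ), sum_ite_mem, univ_inter, sum_const,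
    nsmul_eq_mul]
  rw [hdeg, card_eq_sum_ones, Nat.cast_sum]
  refine sum_congr rfl fun e he ↦ ?_
  obtain ⟨heE, hi⟩ := mem_filter.mp he
  have hcard : (2 : ℝ) ≤ e.card := by exact_mod_cast hE e heE
  rw [card_erase_of_mem hi, Nat.cast_pred (card_pos.mpr ⟨i, hi⟩), Nat.cast_one,
    mul_one_div_cancel (by linarith)]

lemma sum_signlessLap_row (hE : ∀ e ∈ E, 2 ≤ e.card) (i : Fin n) :
    ∑ j, signlessLap E i j = 2 * hdeg E i := by
  simp only [signlessLap, Matrix.add_apply, sum_add_distrib, diagonal_apply, sum_ite_eq,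
    mem_univ, if_true, sum_adjMat_row E hE]
  ring

lemma sum_hdeg : ∑ i, hdeg E i = ∑ e ∈ E, e.card := by
  simp_rw [hdeg, card_filter]
  rw [sum_comm]
  simp

lemma two_mul_sum_card_le_qmax_mul (hE : ∀ e ∈ E, 2 ≤ e.card) :
    2 * ∑ e ∈ E, (e.card : ℝ) ≤ qmax (signlessLap E) * n := by
  have := (signlessLap_isHermitian E).dotProduct_mulVec_le_sSup_spectrum_mul (fun _ ↦ 1)
  simp only [dotProduct, mulVec, one_mul, mul_one, sum_const, card_univ, Fintype.card_fin,
    nsmul_eq_mul, sum_signlessLap_row E hE, ← mul_sum] at this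
  rw [← Nat.cast_sum, sum_hdeg, Nat.cast_sum] at this
  exact this

-- For `c ≤ 1` the term `1 / (c - 1)` is `-1` or the junk value `1 / 0 = 0`.
lemma one_add_one_div_sub_one_le_two (c : ℕ) : 1 + 1 / ((c : ℝ) - 1) ≤ 2 := by
  rcases lt_or_ge c 2 with hc | hc
  · interval_cases c <;> norm_num
  · have : (1 : ℝ) ≤ c - 1 := by
      have : (2 : ℝ) ≤ c := by exact_mod_cast hc
      linarith
    linarith [div_le_one_of_le₀ this (by linarith)]

theorem stmt_4_general (n k : ℕ) (hn : 2 ≤ n) (hk : 2 ≤ k) (E : Finset (Finset (Fin n)))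
    (hU : IsUniform k E) :
    qmax (signlessLap E) ≥
      ((k : ℝ) * E.card / n) * (1 + 1 / ((strongChromatic E : ℝ) - 1)) := by
  have hn0 : (0 : ℝ) < n := Nat.cast_pos.mpr (by omega)
  have hQ : 2 * ((k : ℝ) * E.card) ≤ qmax (signlessLap E) * n := by
    have := two_mul_sum_card_le_qmax_mul E fun e he ↦ hU e he ▸ hk
    rwa [sum_congr rfl fun e he ↦ congrArg Nat.cast (hU e he), sum_const, nsmul_eq_mul,
      mul_comm (E.card : ℝ)] at this
  calc ((k : ℝ) * E.card / n) * (1 + 1 / ((strongChromatic E : ℝ) - 1))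
      ≤ ((k : ℝ) * E.card / n) * 2 :=
        mul_le_mul_of_nonneg_left (one_add_one_div_sub_one_le_two _) (by positivity)
    _ ≤ qmax (signlessLap E) := by
        rw [div_mul_eq_mul_div, div_le_iff₀ hn0]
        linarith

theorem stmt_4 (n k : ℕ) (hn : 2 ≤ n) (hk : 2 ≤ k) (E : Finset (Finset (Fin n)))
    (hU : IsUniform k E) (hc : Conn E) :
    qmax (signlessLap E) ≥
      ((k : ℝ) * E.card / n) * (1 + 1 / ((strongChromatic E : ℝ) - 1)) :=
  stmt_4_general n k hn hk E hU
end

section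
/- Let H be a connected k-uniform hypergraph. Then q_max(H) ≤ max over vertices i of (d_i + s_i/(k-1)), where s_i = Σ_{j∼i} d_j·d_ij/d_i is the average degree of vertex i. -/
open Finset

/-! Conjugating `Q` by the diagonal matrix `D` of vertex degrees (all positive when the hypergraph
is connected and has an edge) gives `D⁻¹ Q D`, which has the spectrum of `Q`, nonnegative entries,
and row sums `d_i + s_i / (k - 1)`. Gershgorin's theorem bounds every real eigenvalue of a
nonnegative matrix by its largest row sum. -/

namespace Matrix

variable {ι : Type*} [Fintype ι] [DecidableEq ι] {A : Matrix ι ι ℝ} {μ : ℝ}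

theorem exists_le_sum_row_of_mem_spectrum (hA : ∀ i j, 0 ≤ A i j) (hμ : μ ∈ spectrum ℝ A) :
    ∃ i, μ ≤ ∑ j, A i j := by
  rw [← spectrum_toLin', ← Module.End.hasEigenvalue_iff_mem_spectrum] at hμ
  obtain ⟨i, hi⟩ := eigenvalue_mem_ball hμ
  refine ⟨i, ?_⟩
  rw [Metric.mem_closedBall, Real.dist_eq, abs_le] at hi
  rw [← Finset.add_sum_erase _ _ (Finset.mem_univ i)]
  simpa [Real.norm_eq_abs, abs_of_nonneg (hA _ _)] using hi.2

theorem exists_le_weighted_sum_row_of_mem_spectrum (hA : ∀ i j, 0 ≤ A i j) {d : ι → ℝ}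
    (hd : ∀ i, 0 < d i) (hμ : μ ∈ spectrum ℝ A) :
    ∃ i, μ ≤ (∑ j, A i j * d j) / d i := by
  let D : (Matrix ι ι ℝ)ˣ :=
    { val := diagonal d
      inv := diagonal d⁻¹
      val_inv := by simp [diagonal_mul_diagonal, fun i => (hd i).ne', diagonal_one]
      inv_val := by simp [diagonal_mul_diagonal, fun i => (hd i).ne', diagonal_one] }
  have hentry (i j : ι) : (D⁻¹ * A * D : Matrix ι ι ℝ) i j = (d i)⁻¹ * A i j * d j := by
    simp [D, diagonal_mul, mul_diagonal]
  rw [← spectrum.units_conjugate' (u := D)] at hμ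
  have hconj_nonneg (i j : ι) : 0 ≤ (D⁻¹ * A * D : Matrix ι ι ℝ) i j := by
    rw [hentry]
    exact mul_nonneg (mul_nonneg (inv_nonneg.2 (hd i).le) (hA i j)) (hd j).le
  obtain ⟨i, hi⟩ := exists_le_sum_row_of_mem_spectrum hconj_nonneg hμ
  refine ⟨i, hi.trans_eq ?_⟩
  simp only [hentry, Finset.sum_div]
  exact Finset.sum_congr rfl fun j _ => by ring

end Matrix

section Hypergraph

variable {n k : ℕ} {E : Finset (Finset (Fin n))}

theorem mem_neighbors {i j : Fin n} : j ∈ neighbors E i ↔ Adj E i j := by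
  simp [neighbors]

theorem edgesBetween_eq_empty_of_not_adj {i j : Fin n} (hij : i ≠ j) (h : ¬Adj E i j) :
    edgesBetween E i j = ∅ :=
  Finset.filter_eq_empty_iff.2 fun e he hije => h ⟨hij, e, he, hije⟩

theorem hdeg_pos_of_conn (hc : Conn E) {e : Finset (Fin n)} (he : e ∈ E) {v : Fin n}
    (hv : v ∈ e) (i : Fin n) : 0 < hdeg E i := by
  obtain ⟨f, hf, hif⟩ : ∃ f ∈ E, i ∈ f := by
    rcases (hc i v).cases_head with rfl | ⟨_, ⟨_, f, hf, hif, _⟩, _⟩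
    exacts [⟨e, he, hv⟩, ⟨f, hf, hif⟩]
  exact Finset.card_pos.2 ⟨f, Finset.mem_filter.2 ⟨hf, hif⟩⟩

theorem signlessLap_empty : signlessLap (∅ : Finset (Finset (Fin n))) = 0 := by
  ext i j
  by_cases hij : i = j <;> simp [signlessLap, adjMat, hdeg, edgesBetween, hij]

theorem signlessLap_apply_self (i : Fin n) : signlessLap E i i = hdeg E i := by
  simp [signlessLap, adjMat]

theorem signlessLap_apply_of_ne (hU : IsUniform k E) {i j : Fin n} (hij : i ≠ j) :
    signlessLap E i j = (edgesBetween E i j).card / ((k : ℝ) - 1) := by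
  simp only [signlessLap, adjMat, Matrix.add_apply, Matrix.diagonal_apply_ne _ hij,
    Matrix.of_apply, if_neg hij, zero_add]
  rw [Finset.sum_congr rfl fun e he => by rw [hU e (Finset.mem_filter.1 he).1],
    Finset.sum_const, nsmul_eq_mul, mul_one_div]

theorem signlessLap_nonneg (hk : 1 ≤ k) (hU : IsUniform k E) (i j : Fin n) :
    0 ≤ signlessLap E i j := by
  rcases eq_or_ne i j with rfl | hij
  · rw [signlessLap_apply_self]; positivity
  · have : (0 : ℝ) ≤ k - 1 := by rw [sub_nonneg]; exact_mod_cast hk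
    rw [signlessLap_apply_of_ne hU hij]; positivity

theorem sum_signlessLap_mul_hdeg (hU : IsUniform k E) (i : Fin n) :
    ∑ j, signlessLap E i j * hdeg E j = (hdeg E i : ℝ) * hdeg E i +
      (∑ j ∈ neighbors E i, (hdeg E j : ℝ) * (edgesBetween E i j).card) / ((k : ℝ) - 1) := by
  rw [← Finset.add_sum_erase _ _ (Finset.mem_univ i), signlessLap_apply_self, Finset.sum_div]
  congr 1
  symm
  refine Finset.sum_subset (fun j hj => ?_) (fun j hj hjn => ?_) |>.trans
    (Finset.sum_congr rfl fun j hj => ?_)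
  · exact Finset.mem_erase.2 ⟨(mem_neighbors.1 hj).1.symm, Finset.mem_univ j⟩
  · have hij := (Finset.mem_erase.1 hj).1.symm
    simp [edgesBetween_eq_empty_of_not_adj hij (mt mem_neighbors.2 hjn)]
  · rw [signlessLap_apply_of_ne hU (Finset.mem_erase.1 hj).1.symm]
    ring

end Hypergraph

theorem stmt_5_general (n k : ℕ) (hk : 2 ≤ k) (E : Finset (Finset (Fin n)))
    (hU : IsUniform k E) (hc : Conn E) :
    qmax (signlessLap E) ≤
      ⨆ i : Fin n, ((hdeg E i : ℝ) +
        ((∑ j ∈ neighbors E i, (hdeg E j : ℝ) * ((edgesBetween E i j).card : ℝ)) /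
            (hdeg E i : ℝ)) / ((k : ℝ) - 1)) := by
  set bound : Fin n → ℝ := fun i => (hdeg E i : ℝ) +
    ((∑ j ∈ neighbors E i, (hdeg E j : ℝ) * ((edgesBetween E i j).card : ℝ)) /
      (hdeg E i : ℝ)) / ((k : ℝ) - 1)
  have hk1 : (0 : ℝ) < k - 1 := by rw [sub_pos]; exact_mod_cast hk
  have hbound_nonneg (i : Fin n) : 0 ≤ bound i := by positivity
  refine Real.sSup_le (fun μ hμ => ?_) (Real.iSup_nonneg hbound_nonneg)
  obtain ⟨i, hi⟩ : ∃ i, μ ≤ bound i := by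
    rcases E.eq_empty_or_nonempty with rfl | ⟨e, he⟩
    · rw [signlessLap_empty] at hμ
      obtain ⟨i, hi⟩ := Matrix.exists_le_sum_row_of_mem_spectrum (fun _ _ => le_rfl) hμ
      exact ⟨i, (hi.trans_eq (by simp)).trans (hbound_nonneg i)⟩
    · obtain ⟨v, hv⟩ : e.Nonempty := Finset.card_pos.1 (by rw [hU e he]; omega)
      have hdeg_pos := hdeg_pos_of_conn hc he hv
      obtain ⟨i, hi⟩ := Matrix.exists_le_weighted_sum_row_of_mem_spectrum
        (signlessLap_nonneg (by omega) hU) (fun j => Nat.cast_pos.2 (hdeg_pos j)) hμ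
      refine ⟨i, hi.trans_eq ?_⟩
      rw [sum_signlessLap_mul_hdeg hU, add_div, mul_self_div_self, div_right_comm]
  exact hi.trans (le_ciSup (Set.finite_range bound).bddAbove i)

theorem stmt_5 (n k : ℕ) (hn : 0 < n) (hk : 2 ≤ k) (E : Finset (Finset (Fin n)))
    (hU : IsUniform k E) (hc : Conn E) :
    qmax (signlessLap E) ≤
      ⨆ i : Fin n, ((hdeg E i : ℝ) +
        ((∑ j ∈ neighbors E i, (hdeg E j : ℝ) * ((edgesBetween E i j).card : ℝ)) /
            (hdeg E i : ℝ)) / ((k : ℝ) - 1)) :=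
  stmt_5_general n k hk E hU hc
end
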